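/- arXiv:2604.23022 — 4 statements merged into one kernel-verified Lean document; each statement's English description precedes it below -/
import Mathlib

section
/- Let Π be a nonempty finite set, let V, B, V̂, B̂ : Π → ℝ with B(π) ≥ 0 for every π ∈ Π, let λ ≥ 0, and let ε_V, ε_B ≥ 0 satisfy |V̂(π) − V(π)| ≤ ε_V and |B̂(π) − B(π)| ≤ ε_B for every π ∈ Π. If π* maximizes V over Π and π̂ maximizes Ĵ_λ(π) = V̂(π) − λ B̂(π) over Π, then V(π*) − V(π̂) ≤ λ B(π*) + 2 ε_V + 2 λ ε_B. -/
/-!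
The empirical objective `Ĵ_λ = V̂ - λ B̂` is uniformly within `εV + λ εB` of the penalized
objective `J_λ = V - λ B`. Since `π̂` beats `π*` under `Ĵ_λ`,
`V(π*) - V(π̂) ≤ (V - Ĵ_λ)(π*) + (Ĵ_λ - V)(π̂)`; the first term equals `λ B(π*) + (J_λ - Ĵ_λ)(π*)`,
and the second is `(Ĵ_λ - J_λ)(π̂) - λ B(π̂) ≤ εV + λ εB` because the burden is nonnegative.
-/

def penalized {α : Type*} (lam : ℝ) (V B : α → ℝ) (p : α) : ℝ := V p - lam * B p

theorem abs_penalized_sub_penalized_le {α : Type*} {V B Vhat Bhat : α → ℝ} {lam εV εB : ℝ}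
    (hlam : 0 ≤ lam) {p : α} (hV : |Vhat p - V p| ≤ εV) (hB : |Bhat p - B p| ≤ εB) :
    |penalized lam Vhat Bhat p - penalized lam V B p| ≤ εV + lam * εB :=
  calc |penalized lam Vhat Bhat p - penalized lam V B p|
      = |(Vhat p - V p) - lam * (Bhat p - B p)| := by unfold penalized; ring_nf
    _ ≤ |Vhat p - V p| + |lam * (Bhat p - B p)| := abs_sub _ _
    _ = |Vhat p - V p| + lam * |Bhat p - B p| := by rw [abs_mul, abs_of_nonneg hlam]
    _ ≤ εV + lam * εB := by gcongr

theorem stmt6_general {Pol : Type*}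
    (V B Vhat Bhat : Pol → ℝ) (hB : ∀ p, 0 ≤ B p)
    (lam : ℝ) (hlam : 0 ≤ lam)
    (εV εB : ℝ)
    (hVacc : ∀ p, |Vhat p - V p| ≤ εV)
    (hBacc : ∀ p, |Bhat p - B p| ≤ εB)
    (pstar phat : Pol)
    (hhat : ∀ p, Vhat p - lam * Bhat p ≤ Vhat phat - lam * Bhat phat) :
    V pstar - V phat ≤ lam * B pstar + 2 * εV + 2 * lam * εB := by
  have hJ p := abs_le.1 (abs_penalized_sub_penalized_le hlam (hVacc p) (hBacc p))
  have hstar : V pstar - penalized lam Vhat Bhat pstar ≤ lam * B pstar + (εV + lam * εB) := by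
    unfold penalized at hJ ⊢; linarith [(hJ pstar).1]
  have hhat' : penalized lam Vhat Bhat phat - V phat ≤ εV + lam * εB := by
    unfold penalized at hJ ⊢; linarith [(hJ phat).2, mul_nonneg hlam (hB phat)]
  calc V pstar - V phat
      = (V pstar - penalized lam Vhat Bhat pstar)
        + (penalized lam Vhat Bhat pstar - penalized lam Vhat Bhat phat)
        + (penalized lam Vhat Bhat phat - V phat) := by ring
    _ ≤ (lam * B pstar + (εV + lam * εB)) + 0 + (εV + lam * εB) :=
        add_le_add_three hstar (sub_nonpos.2 (hhat pstar)) hhat'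
    _ = lam * B pstar + 2 * εV + 2 * lam * εB := by ring

/-- **Uniform-selection reduction.**
If the value and burden estimates are uniformly accurate to within `εV` and `εB`
over a finite nonempty policy library, `pstar` maximizes the true value `V`, and
`phat` maximizes the empirical penalized objective `Ĵ_λ(π) = V̂(π) - λ B̂(π)`,
then `V(pstar) - V(phat) ≤ λ B(pstar) + 2 εV + 2 λ εB`. -/
theorem stmt6 {Pol : Type*} [Fintype Pol] [Nonempty Pol]
    (V B Vhat Bhat : Pol → ℝ) (hB : ∀ p, 0 ≤ B p)
    (lam : ℝ) (hlam : 0 ≤ lam)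
    (εV εB : ℝ) (hεV : 0 ≤ εV) (hεB : 0 ≤ εB)
    (hVacc : ∀ p, |Vhat p - V p| ≤ εV)
    (hBacc : ∀ p, |Bhat p - B p| ≤ εB)
    (pstar phat : Pol)
    (hstar : ∀ p, V p ≤ V pstar)
    (hhat : ∀ p, Vhat p - lam * Bhat p ≤ Vhat phat - lam * Bhat phat) :
    V pstar - V phat ≤ lam * B pstar + 2 * εV + 2 * lam * εB :=
  stmt6_general V B Vhat Bhat hB lam hlam εV εB hVacc hBacc pstar phat hhat
end

section
/- Let π be a feasible policy, let q̂ : 𝒳 × A1 × A2 → ℝ be a fixed bounded measurable function, suppose the reward regression q is bounded and Y has E[Y | X, A1, A2] = q(X, A1, A2), and suppose the coupled importance ratio w_π(X, A1, A2) is essentially bounded (for instance because the behavior propensities are bounded below by some ν > 0 on the feasible support). Define the plug-in term m_{q̂}(x; π) = Σ_{a1∈A1} π1(a1|x) Σ_{a2∈S(x,a1)} π2(a2|x, a1) q̂(x, a1, a2) and the doubly robust score ψ_π(O; q̂) = m_{q̂}(X; π) + w_π(X, A1, A2) · (Y − q̂(X, A1, A2)). Then E[ ψ_π(O; q̂) ]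 = V(π), where V(π) is the value of π under q. -/
/-!
Treat the two-stage policy as a one-stage policy on `A1 × A2` with propensities `e = μ1 μ2` and
`p = π1 π2`. On the event that action `a` is logged, the correction `w (Y - q̂)` has mean
`e w (q - q̂) = p (q - q̂)` at `(x, a)`; summed over actions this cancels the plug-in term `∑ₐ p q̂`
and leaves `∑ₐ p q`. Since the law of the log is only known through bounded test functions, `w` is
replaced by its truncation at the essential bound: this does not change `w` on the sample, and the
set where the truncation differs from `w` carries no logging mass, whence `e · truncRatio = p`
almost everywhere.
-/

open MeasureTheory ProbabilityTheory

def IsBoundedFun {α : Type*} (f : α → ℝ) : Prop :=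
  ∃ C, ∀ x, |f x| ≤ C

namespace IsBoundedFun

variable {α β : Type*} {f g : α → ℝ}

lemma add (hf : IsBoundedFun f) (hg : IsBoundedFun g) : IsBoundedFun fun x => f x + g x :=
  let ⟨C, hC⟩ := hf
  let ⟨D, hD⟩ := hg
  ⟨C + D, fun x => (abs_add_le _ _).trans (add_le_add (hC x) (hD x))⟩

lemma sub (hf : IsBoundedFun f) (hg : IsBoundedFun g) : IsBoundedFun fun x => f x - g x :=
  let ⟨C, hC⟩ := hf
  let ⟨D, hD⟩ := hg
  ⟨C + D, fun x => (abs_sub _ _).trans (add_le_add (hC x) (hD x))⟩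

lemma mul (hf : IsBoundedFun f) (hg : IsBoundedFun g) : IsBoundedFun fun x => f x * g x :=
  let ⟨C, hC⟩ := hf
  let ⟨D, hD⟩ := hg
  ⟨C * D, fun x => by
    rw [abs_mul]
    exact mul_le_mul (hC x) (hD x) (abs_nonneg _) ((abs_nonneg _).trans (hC x))⟩

lemma sum {ι : Type*} (s : Finset ι) {f : ι → α → ℝ} (hf : ∀ i, IsBoundedFun (f i)) :
    IsBoundedFun fun x => ∑ i ∈ s, f i x := by
  classical
  induction s using Finset.induction_on with
  | empty => exact ⟨0, fun x => by simp⟩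
  | insert i s hi ih => simpa only [Finset.sum_insert hi] using (hf i).add ih

lemma comp (hf : IsBoundedFun f) (k : β → α) : IsBoundedFun fun y => f (k y) :=
  let ⟨C, hC⟩ := hf
  ⟨C, fun y => hC (k y)⟩

lemma integrable [MeasurableSpace α] {μ : Measure α} [IsFiniteMeasure μ] (hf : IsBoundedFun f)
    (hfm : Measurable f) : Integrable f μ :=
  let ⟨C, hC⟩ := hf
  .of_bound hfm.aestronglyMeasurable C (.of_forall hC)

lemma of_nonneg_of_sum_eq_one {ι : Type*} [Fintype ι] {p : α → ι → ℝ} (hp0 : ∀ x i, 0 ≤ p x i)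
    (hp1 : ∀ x, ∑ i, p x i = 1) (i : ι) : IsBoundedFun fun x => p x i :=
  ⟨1, fun x => by
    rw [abs_of_nonneg (hp0 x i), ← hp1 x]
    exact Finset.single_le_sum (fun j _ => hp0 x j) (Finset.mem_univ i)⟩

end IsBoundedFun

lemma sum_mul_plugIn_add_eq {A : Type*} [Fintype A] {e w p q qhat : A → ℝ} (he : ∑ a, e a = 1)
    (hew : ∀ a, e a * w a = p a) :
    ∑ a, e a * (∑ b, p b * qhat b + w a * (q a - qhat a)) = ∑ a, p a * q a := by
  calc ∑ a, e a * (∑ b, p b * qhat b + w a * (q a - qhat a))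
      = (∑ a, e a) * ∑ b, p b * qhat b + ∑ a, e a * w a * (q a - qhat a) := by
        rw [Finset.sum_mul, ← Finset.sum_add_distrib]
        exact Finset.sum_congr rfl fun a _ => by ring
    _ = ∑ a, p a * q a := by
        simp only [he, hew, one_mul, mul_sub, Finset.sum_sub_distrib, add_sub_cancel]

lemma integrable_ite_eq {Ω A : Type*} [MeasurableSpace Ω] [MeasurableSpace A] [DecidableEq A]
    [MeasurableSingletonClass A] {Q : Measure Ω} {act : Ω → A} (hact : Measurable act)
    {F : Ω → ℝ} (hF : Integrable F Q) (a : A) :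
    Integrable (fun ω => if act ω = a then F ω else 0) Q := by
  refine (hF.indicator (hact (measurableSet_singleton a))).congr (.of_forall fun ω => ?_)
  by_cases h : act ω = a <;> simp [h]

noncomputable section LoggedBandit

variable {𝒳 Ω A : Type*} [MeasurableSpace 𝒳] [MeasurableSpace Ω] [DecidableEq A]
  {P : Measure 𝒳} {Q : Measure Ω} {X : Ω → 𝒳} {act : Ω → A} {Y : Ω → ℝ} {e p q : 𝒳 → A → ℝ}

def plugIn [Fintype A] (p f : 𝒳 → A → ℝ) (x : 𝒳) : ℝ :=
  ∑ a, p x a * f x a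

def drScore [Fintype A] (e p qhat : 𝒳 → A → ℝ) (x : 𝒳) (a : A) (y : ℝ) : ℝ :=
  plugIn p qhat x + p x a / e x a * (y - qhat x a)

def truncRatio (e p : 𝒳 → A → ℝ) (C : ℝ) (x : 𝒳) (a : A) : ℝ :=
  if |p x a / e x a| ≤ C then p x a / e x a else 0

def HasLoggingDensity (P : Measure 𝒳) (Q : Measure Ω) (X : Ω → 𝒳) (act : Ω → A)
    (e : 𝒳 → A → ℝ) : Prop :=
  ∀ a (h : 𝒳 → ℝ), Measurable h → IsBoundedFun h →
    ∫ ω, (if act ω = a then h (X ω) else 0) ∂Q = ∫ x, e x a * h x ∂P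

def HasRewardRegression (P : Measure 𝒳) (Q : Measure Ω) (X : Ω → 𝒳) (act : Ω → A)
    (e : 𝒳 → A → ℝ) (Y : Ω → ℝ) (q : 𝒳 → A → ℝ) : Prop :=
  ∀ a (h : 𝒳 → ℝ), Measurable h → IsBoundedFun h →
    ∫ ω, (if act ω = a then Y ω * h (X ω) else 0) ∂Q = ∫ x, e x a * q x a * h x ∂P

lemma integral_eq_sum_integral_ite [Fintype A] [MeasurableSpace A] [MeasurableSingletonClass A]
    (hact : Measurable act) {F : A → Ω → ℝ} (hF : ∀ a, Integrable (F a) Q) :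
    ∫ ω, F (act ω) ω ∂Q = ∑ a, ∫ ω, (if act ω = a then F a ω else 0) ∂Q := by
  rw [← integral_finsetSum _ fun a _ => integrable_ite_eq hact (hF a) a]
  simp only [Finset.sum_ite_eq_of_mem _ _ _ (Finset.mem_univ _)]

lemma ae_mul_truncRatio_eq [IsFiniteMeasure P] (hlaw : HasLoggingDensity P Q X act e)
    (he_meas : ∀ a, Measurable fun x => e x a) (he_bdd : ∀ a, IsBoundedFun fun x => e x a)
    (he0 : ∀ x a, 0 ≤ e x a) (hp_meas : ∀ a, Measurable fun x => p x a)
    (hp_supp : ∀ x a, e x a = 0 → p x a = 0) {C : ℝ}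
    (hw : ∀ᵐ ω ∂Q, |p (X ω) (act ω) / e (X ω) (act ω)| ≤ C) (a : A) :
    ∀ᵐ x ∂P, e x a * truncRatio e p C x a = p x a := by
  set B := {x | C < |p x a / e x a|}
  have hB : MeasurableSet B :=
    measurableSet_lt measurable_const ((hp_meas a).div (he_meas a)).abs
  have hB_meas : Measurable (B.indicator (1 : 𝒳 → ℝ)) := measurable_one.indicator hB
  have hB_bdd : IsBoundedFun (B.indicator (1 : 𝒳 → ℝ)) :=
    ⟨1, fun x => by by_cases hx : x ∈ B <;> simp [hx]⟩
  have hQ : ∫ ω, (if act ω = a then B.indicator (1 : 𝒳 → ℝ) (X ω) else 0) ∂Q = 0 := by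
    refine integral_eq_zero_of_ae (hw.mono fun ω hω => ?_)
    dsimp only
    split_ifs with h
    · subst h
      exact Set.indicator_of_notMem (s := B) (not_lt.2 hω) 1
    · rfl
  have hP : (fun x => e x a * B.indicator 1 x) =ᵐ[P] 0 := by
    refine (integral_eq_zero_iff_of_nonneg (fun x => ?_)
      (((he_bdd a).mul hB_bdd).integrable ((he_meas a).mul hB_meas))).1 ?_
    · exact mul_nonneg (he0 x a) (Set.indicator_nonneg (fun _ _ => zero_le_one) x)
    · rw [← hlaw a _ hB_meas hB_bdd, hQ]
  filter_upwards [hP] with x hx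
  by_cases hxB : x ∈ B
  · have he : e x a = 0 := by simpa [hxB] using hx
    rw [he, zero_mul, hp_supp x a he]
  · rw [truncRatio, if_pos (not_lt.1 hxB), mul_div_cancel_of_imp' (hp_supp x a)]

lemma integrable_mul_comp [IsFiniteMeasure Q] (hX : Measurable X) (hY : Integrable Y Q)
    {h : 𝒳 → ℝ} (hh : Measurable h) (hhb : IsBoundedFun h) :
    Integrable (fun ω => Y ω * h (X ω)) Q :=
  let ⟨_, hC⟩ := hhb
  hY.mul_bdd (hh.comp hX).aestronglyMeasurable (.of_forall fun ω => hC (X ω))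

lemma integrable_dr_term [IsFiniteMeasure Q] (hX : Measurable X) (hY : Integrable Y Q)
    {g h r : 𝒳 → ℝ} (hg : Measurable g) (hh : Measurable h) (hr : Measurable r)
    (hgb : IsBoundedFun g) (hhb : IsBoundedFun h) (hrb : IsBoundedFun r) :
    Integrable (fun ω => g (X ω) + h (X ω) * (Y ω - r (X ω))) Q := by
  refine ((((hgb.sub (hhb.mul hrb)).comp X).integrable ((hg.sub (hh.mul hr)).comp hX)).add
    (integrable_mul_comp hX hY hh hhb)).congr (.of_forall fun ω => ?_)
  simp only [Pi.add_apply]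
  ring

lemma integral_ite_dr_term_eq [MeasurableSpace A] [MeasurableSingletonClass A] [IsFiniteMeasure P]
    [IsFiniteMeasure Q] (hX : Measurable X) (hact : Measurable act) (hY : Integrable Y Q)
    (he_meas : ∀ a, Measurable fun x => e x a) (he_bdd : ∀ a, IsBoundedFun fun x => e x a)
    (hq_meas : ∀ a, Measurable fun x => q x a) (hq_bdd : ∀ a, IsBoundedFun fun x => q x a)
    (hlaw : HasLoggingDensity P Q X act e) (hreg : HasRewardRegression P Q X act e Y q)
    {g h r : 𝒳 → ℝ} (hg : Measurable g) (hh : Measurable h) (hr : Measurable r)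
    (hgb : IsBoundedFun g) (hhb : IsBoundedFun h) (hrb : IsBoundedFun r) (a : A) :
    ∫ ω, (if act ω = a then g (X ω) + h (X ω) * (Y ω - r (X ω)) else 0) ∂Q
      = ∫ x, e x a * (g x + h x * (q x a - r x)) ∂P := by
  have hk : Measurable fun x => g x - h x * r x := hg.sub (hh.mul hr)
  have hkb : IsBoundedFun fun x => g x - h x * r x := hgb.sub (hhb.mul hrb)
  calc _ = ∫ ω, ((if act ω = a then g (X ω) - h (X ω) * r (X ω) else 0)
        + (if act ω = a then Y ω * h (X ω) else 0)) ∂Q := by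
        congr 1
        ext ω
        split_ifs <;> ring
    _ = ∫ x, e x a * (g x - h x * r x) ∂P + ∫ x, e x a * q x a * h x ∂P := by
        rw [integral_add (integrable_ite_eq hact ((hkb.comp X).integrable (hk.comp hX)) a)
          (integrable_ite_eq hact (integrable_mul_comp hX hY hh hhb) a),
          hlaw a _ hk hkb, hreg a h hh hhb]
    _ = _ := by
        rw [← integral_add (((he_bdd a).mul hkb).integrable ((he_meas a).mul hk))
          ((((he_bdd a).mul (hq_bdd a)).mul hhb).integrable
            (((he_meas a).mul (hq_meas a)).mul hh))]
        congr 1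
        ext x
        ring

theorem integral_drScore_eq [Fintype A] [MeasurableSpace A] [MeasurableSingletonClass A]
    [IsFiniteMeasure P] [IsFiniteMeasure Q] (hX : Measurable X) (hact : Measurable act)
    (hY : Integrable Y Q) (he_meas : ∀ a, Measurable fun x => e x a) (he0 : ∀ x a, 0 ≤ e x a)
    (he1 : ∀ x, ∑ a, e x a = 1) (hp_meas : ∀ a, Measurable fun x => p x a)
    (hp_bdd : ∀ a, IsBoundedFun fun x => p x a) (hp_supp : ∀ x a, e x a = 0 → p x a = 0)
    (hq_meas : ∀ a, Measurable fun x => q x a) (hq_bdd : ∀ a, IsBoundedFun fun x => q x a)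
    {qhat : 𝒳 → A → ℝ} (hqhat_meas : ∀ a, Measurable fun x => qhat x a)
    (hqhat_bdd : ∀ a, IsBoundedFun fun x => qhat x a)
    (hlaw : HasLoggingDensity P Q X act e) (hreg : HasRewardRegression P Q X act e Y q) {C : ℝ}
    (hw : ∀ᵐ ω ∂Q, |p (X ω) (act ω) / e (X ω) (act ω)| ≤ C) :
    ∫ ω, drScore e p qhat (X ω) (act ω) (Y ω) ∂Q = ∫ x, plugIn p q x ∂P := by
  have he_bdd := IsBoundedFun.of_nonneg_of_sum_eq_one he0 he1
  set w := truncRatio e p C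
  have hw_meas (a : A) : Measurable fun x => w x a :=
    Measurable.ite (measurableSet_le ((hp_meas a).div (he_meas a)).abs measurable_const)
      ((hp_meas a).div (he_meas a)) measurable_const
  have hw_bdd (a : A) : IsBoundedFun fun x => w x a := ⟨|C|, fun x => by
    simp only [w, truncRatio]
    split_ifs with h
    exacts [h.trans (le_abs_self C), by simp]⟩
  have hm_meas : Measurable (plugIn p qhat) :=
    Finset.measurable_sum _ fun a _ => (hp_meas a).mul (hqhat_meas a)
  have hm_bdd : IsBoundedFun (plugIn p qhat) :=
    IsBoundedFun.sum _ fun a => (hp_bdd a).mul (hqhat_bdd a)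
  calc ∫ ω, drScore e p qhat (X ω) (act ω) (Y ω) ∂Q
      = ∫ ω, plugIn p qhat (X ω) + w (X ω) (act ω) * (Y ω - qhat (X ω) (act ω)) ∂Q :=
        integral_congr_ae (hw.mono fun ω hω => by simp only [drScore, w, truncRatio, if_pos hω])
    _ = ∑ a, ∫ ω, (if act ω = a then
          plugIn p qhat (X ω) + w (X ω) a * (Y ω - qhat (X ω) a) else 0) ∂Q :=
        integral_eq_sum_integral_ite hact fun a => integrable_dr_term hX hY hm_meas (hw_meas a)
          (hqhat_meas a) hm_bdd (hw_bdd a) (hqhat_bdd a)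
    _ = ∑ a, ∫ x, e x a * (plugIn p qhat x + w x a * (q x a - qhat x a)) ∂P :=
        Finset.sum_congr rfl fun a _ => integral_ite_dr_term_eq hX hact hY he_meas he_bdd hq_meas
          hq_bdd hlaw hreg hm_meas (hw_meas a) (hqhat_meas a) hm_bdd (hw_bdd a) (hqhat_bdd a) a
    _ = ∫ x, ∑ a, e x a * (plugIn p qhat x + w x a * (q x a - qhat x a)) ∂P :=
        (integral_finsetSum _ fun a _ => ((he_bdd a).mul (hm_bdd.add ((hw_bdd a).mul
          ((hq_bdd a).sub (hqhat_bdd a))))).integrable ((he_meas a).mul (hm_meas.add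
          ((hw_meas a).mul ((hq_meas a).sub (hqhat_meas a)))))).symm
    _ = ∫ x, plugIn p q x ∂P := by
        refine integral_congr_ae ?_
        filter_upwards [ae_all_iff.2 fun a => ae_mul_truncRatio_eq hlaw he_meas he_bdd he0
          hp_meas hp_supp hw a] with x hx
        exact sum_mul_plugIn_add_eq (he1 x) hx

end LoggedBandit

lemma sum_mul_sum_eq_sum_prod {ι κ : Type*} [Fintype ι] [Fintype κ] (s : ι → Finset κ)
    (f : ι → ℝ) {g : ι → κ → ℝ} (hg : ∀ i j, j ∉ s i → g i j = 0) (F : ι → κ → ℝ) :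
    ∑ i, f i * ∑ j ∈ s i, g i j * F i j = ∑ ij : ι × κ, f ij.1 * g ij.1 ij.2 * F ij.1 ij.2 := by
  rw [Fintype.sum_prod_type]
  refine Finset.sum_congr rfl fun i _ => ?_
  rw [Finset.sum_subset (Finset.subset_univ (s i)) fun j _ hj => by rw [hg i j hj, zero_mul],
    Finset.mul_sum]
  simp only [mul_assoc]

lemma sum_prod_mul_eq_one {ι κ : Type*} [Fintype ι] [Fintype κ] {f : ι → ℝ} {g : ι → κ → ℝ}
    (hf : ∑ i, f i = 1) (hg : ∀ i, ∑ j, g i j = 1) : ∑ ij : ι × κ, f ij.1 * g ij.1 ij.2 = 1 := by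
  simp only [Fintype.sum_prod_type, ← Finset.mul_sum, hg, mul_one, hf]

theorem stmt7_general
    {𝒳 : Type*} [m𝒳 : MeasurableSpace 𝒳] (P : Measure 𝒳) [IsProbabilityMeasure P]
    {A1 A2 : Type*} [Fintype A1] [Fintype A2]
    [DecidableEq A1] [DecidableEq A2]
    [MeasurableSpace A1] [MeasurableSingletonClass A1]
    [MeasurableSpace A2] [MeasurableSingletonClass A2]
    (S : 𝒳 → A1 → Finset A2)
    (π1 : 𝒳 → A1 → ℝ) (π2 : 𝒳 → A1 → A2 → ℝ)
    (hπ1meas : ∀ a1, Measurable fun x => π1 x a1)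
    (hπ2meas : ∀ a1 a2, Measurable fun x => π2 x a1 a2)
    (hπ1nn : ∀ x a1, 0 ≤ π1 x a1) (hπ1sum : ∀ x, ∑ a1, π1 x a1 = 1)
    (hπ2nn : ∀ x a1 a2, 0 ≤ π2 x a1 a2) (hπ2sum : ∀ x a1, ∑ a2, π2 x a1 a2 = 1)
    (hπ2supp : ∀ x a1 a2, a2 ∉ S x a1 → π2 x a1 a2 = 0)
    (μ1 : 𝒳 → A1 → ℝ) (μ2 : 𝒳 → A1 → A2 → ℝ)
    (hμ1meas : ∀ a1, Measurable fun x => μ1 x a1)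
    (hμ2meas : ∀ a1 a2, Measurable fun x => μ2 x a1 a2)
    (hμ1sum : ∀ x, ∑ a1, μ1 x a1 = 1)
    (hμ2nn : ∀ x a1 a2, 0 ≤ μ2 x a1 a2) (hμ2sum : ∀ x a1, ∑ a2, μ2 x a1 a2 = 1)
    (hμ1pos : ∀ x a1, 0 < μ1 x a1)
    (hμ2pos : ∀ x a1 a2, a2 ∈ S x a1 → 0 < μ2 x a1 a2)
    (q : 𝒳 → A1 → A2 → ℝ)
    (hqmeas : ∀ a1 a2, Measurable fun x => q x a1 a2)
    (Cq : ℝ) (hqbd : ∀ x a1 a2, |q x a1 a2| ≤ Cq)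
    (qhat : 𝒳 → A1 → A2 → ℝ)
    (hqhatmeas : ∀ a1 a2, Measurable fun x => qhat x a1 a2)
    (Cqhat : ℝ) (hqhatbd : ∀ x a1 a2, |qhat x a1 a2| ≤ Cqhat)
    {Ω : Type*} [MeasurableSpace Ω] (Q : Measure Ω) [IsProbabilityMeasure Q]
    (X : Ω → 𝒳) (A1v : Ω → A1) (A2v : Ω → A2) (Y : Ω → ℝ)
    (hX : Measurable X) (hA1v : Measurable A1v) (hA2v : Measurable A2v)
    (hYint : Integrable Y Q)
    (hlaw : ∀ (a1 : A1) (a2 : A2) (h : 𝒳 → ℝ), Measurable h →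
      (∃ C, ∀ x, |h x| ≤ C) →
      ∫ ω, (if A1v ω = a1 ∧ A2v ω = a2 then h (X ω) else 0) ∂Q
        = ∫ x, μ1 x a1 * μ2 x a1 a2 * h x ∂P)
    (hlawY : ∀ (a1 : A1) (a2 : A2) (h : 𝒳 → ℝ), Measurable h →
      (∃ C, ∀ x, |h x| ≤ C) →
      ∫ ω, (if A1v ω = a1 ∧ A2v ω = a2 then Y ω * h (X ω) else 0) ∂Q
        = ∫ x, μ1 x a1 * μ2 x a1 a2 * q x a1 a2 * h x ∂P)
    (Cw : ℝ)
    (hwbd : ∀ᵐ ω ∂Q, |π1 (X ω) (A1v ω) * π2 (X ω) (A1v ω) (A2v ω) /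
      (μ1 (X ω) (A1v ω) * μ2 (X ω) (A1v ω) (A2v ω))| ≤ Cw) :
    ∫ ω, ((∑ a1, π1 (X ω) a1 *
        ∑ a2 ∈ S (X ω) a1, π2 (X ω) a1 a2 * qhat (X ω) a1 a2) +
      π1 (X ω) (A1v ω) * π2 (X ω) (A1v ω) (A2v ω) /
        (μ1 (X ω) (A1v ω) * μ2 (X ω) (A1v ω) (A2v ω)) *
        (Y ω - qhat (X ω) (A1v ω) (A2v ω))) ∂Q
      = ∫ x, ∑ a1, π1 x a1 * ∑ a2 ∈ S x a1, π2 x a1 a2 * q x a1 a2 ∂P := by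
  have hsupp (x : 𝒳) (a : A1 × A2) (h0 : μ1 x a.1 * μ2 x a.1 a.2 = 0) :
      π1 x a.1 * π2 x a.1 a.2 = 0 := by
    have hμ2 : μ2 x a.1 a.2 = 0 := (mul_eq_zero.1 h0).resolve_left (hμ1pos x a.1).ne'
    rw [hπ2supp x a.1 a.2 fun hmem => (hμ2pos x a.1 a.2 hmem).ne' hμ2, mul_zero]
  have key := integral_drScore_eq (P := P) (Q := Q) (X := X) (act := fun ω => (A1v ω, A2v ω))
    (e := fun x a => μ1 x a.1 * μ2 x a.1 a.2) (p := fun x a => π1 x a.1 * π2 x a.1 a.2)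
    (q := fun x a => q x a.1 a.2) (qhat := fun x a => qhat x a.1 a.2)
    hX (hA1v.prodMk hA2v) hYint
    (fun a => (hμ1meas a.1).mul (hμ2meas a.1 a.2))
    (fun x a => mul_nonneg (hμ1pos x a.1).le (hμ2nn x a.1 a.2))
    (fun x => sum_prod_mul_eq_one (hμ1sum x) (hμ2sum x))
    (fun a => (hπ1meas a.1).mul (hπ2meas a.1 a.2))
    (IsBoundedFun.of_nonneg_of_sum_eq_one (fun x a => mul_nonneg (hπ1nn x a.1) (hπ2nn x a.1 a.2))
      fun x => sum_prod_mul_eq_one (hπ1sum x) (hπ2sum x))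
    hsupp
    (fun a => hqmeas a.1 a.2) (fun a => ⟨Cq, fun x => hqbd x a.1 a.2⟩)
    (fun a => hqhatmeas a.1 a.2) (fun a => ⟨Cqhat, fun x => hqhatbd x a.1 a.2⟩)
    (fun a h hh hb => by simpa only [Prod.ext_iff] using hlaw a.1 a.2 h hh hb)
    (fun a h hh hb => by simpa only [Prod.ext_iff] using hlawY a.1 a.2 h hh hb)
    hwbd
  simp only [sum_mul_sum_eq_sum_prod _ _ (hπ2supp _)]
  exact key

/-- **Unbiasedness of the doubly robust score.**
Let `π` be a feasible policy, `q̂` a fixed bounded measurable reward model, `q`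
a bounded measurable reward regression, and `O = (X, A1, A2, Y)` a logged
observation with `X ∼ P`, `A1 ∼ μ1(·|X)`, `A2 ∼ μ2(·|X,A1)` and
`E[Y | X, A1, A2] = q(X, A1, A2)` (both encoded by the law hypotheses `hlaw`
and `hlawY`), with `Y` integrable. Suppose the coupled importance ratio
`w_π(X, A1, A2)` is essentially bounded. Then the doubly robust score
`ψ_π(O; q̂) = m_q̂(X; π) + w_π(X,A1,A2) (Y - q̂(X,A1,A2))` has expectation
`V(π)`, the value of `π` under `q`. -/
theorem stmt7
    {𝒳 : Type*} [m𝒳 : MeasurableSpace 𝒳] (P : Measure 𝒳) [IsProbabilityMeasure P]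
    {A1 A2 : Type*} [Fintype A1] [Nonempty A1] [Fintype A2] [Nonempty A2]
    [DecidableEq A1] [DecidableEq A2]
    [MeasurableSpace A1] [MeasurableSingletonClass A1]
    [MeasurableSpace A2] [MeasurableSingletonClass A2]
    (S : 𝒳 → A1 → Finset A2) (hS : ∀ x a1, (S x a1).Nonempty)
    (hSmeas : ∀ (a1 : A1) (a2 : A2), MeasurableSet {x | a2 ∈ S x a1})
    (π1 : 𝒳 → A1 → ℝ) (π2 : 𝒳 → A1 → A2 → ℝ)
    (hπ1meas : ∀ a1, Measurable fun x => π1 x a1)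
    (hπ2meas : ∀ a1 a2, Measurable fun x => π2 x a1 a2)
    (hπ1nn : ∀ x a1, 0 ≤ π1 x a1) (hπ1sum : ∀ x, ∑ a1, π1 x a1 = 1)
    (hπ2nn : ∀ x a1 a2, 0 ≤ π2 x a1 a2) (hπ2sum : ∀ x a1, ∑ a2, π2 x a1 a2 = 1)
    (hπ2supp : ∀ x a1 a2, a2 ∉ S x a1 → π2 x a1 a2 = 0)
    (μ1 : 𝒳 → A1 → ℝ) (μ2 : 𝒳 → A1 → A2 → ℝ)
    (hμ1meas : ∀ a1, Measurable fun x => μ1 x a1)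
    (hμ2meas : ∀ a1 a2, Measurable fun x => μ2 x a1 a2)
    (hμ1nn : ∀ x a1, 0 ≤ μ1 x a1) (hμ1sum : ∀ x, ∑ a1, μ1 x a1 = 1)
    (hμ2nn : ∀ x a1 a2, 0 ≤ μ2 x a1 a2) (hμ2sum : ∀ x a1, ∑ a2, μ2 x a1 a2 = 1)
    (hμ2supp : ∀ x a1 a2, a2 ∉ S x a1 → μ2 x a1 a2 = 0)
    (hμ1pos : ∀ x a1, 0 < μ1 x a1)
    (hμ2pos : ∀ x a1 a2, a2 ∈ S x a1 → 0 < μ2 x a1 a2)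
    (q : 𝒳 → A1 → A2 → ℝ)
    (hqmeas : ∀ a1 a2, Measurable fun x => q x a1 a2)
    (Cq : ℝ) (hqbd : ∀ x a1 a2, |q x a1 a2| ≤ Cq)
    (qhat : 𝒳 → A1 → A2 → ℝ)
    (hqhatmeas : ∀ a1 a2, Measurable fun x => qhat x a1 a2)
    (Cqhat : ℝ) (hqhatbd : ∀ x a1 a2, |qhat x a1 a2| ≤ Cqhat)
    {Ω : Type*} [MeasurableSpace Ω] (Q : Measure Ω) [IsProbabilityMeasure Q]
    (X : Ω → 𝒳) (A1v : Ω → A1) (A2v : Ω → A2) (Y : Ω → ℝ)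
    (hX : Measurable X) (hA1v : Measurable A1v) (hA2v : Measurable A2v)
    (hYm : Measurable Y) (hYint : Integrable Y Q)
    (hlaw : ∀ (a1 : A1) (a2 : A2) (h : 𝒳 → ℝ), Measurable h →
      (∃ C, ∀ x, |h x| ≤ C) →
      ∫ ω, (if A1v ω = a1 ∧ A2v ω = a2 then h (X ω) else 0) ∂Q
        = ∫ x, μ1 x a1 * μ2 x a1 a2 * h x ∂P)
    (hlawY : ∀ (a1 : A1) (a2 : A2) (h : 𝒳 → ℝ), Measurable h →
      (∃ C, ∀ x, |h x| ≤ C) →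
      ∫ ω, (if A1v ω = a1 ∧ A2v ω = a2 then Y ω * h (X ω) else 0) ∂Q
        = ∫ x, μ1 x a1 * μ2 x a1 a2 * q x a1 a2 * h x ∂P)
    (Cw : ℝ)
    (hwbd : ∀ᵐ ω ∂Q, |π1 (X ω) (A1v ω) * π2 (X ω) (A1v ω) (A2v ω) /
      (μ1 (X ω) (A1v ω) * μ2 (X ω) (A1v ω) (A2v ω))| ≤ Cw) :
    ∫ ω, ((∑ a1, π1 (X ω) a1 *
        ∑ a2 ∈ S (X ω) a1, π2 (X ω) a1 a2 * qhat (X ω) a1 a2) +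
      π1 (X ω) (A1v ω) * π2 (X ω) (A1v ω) (A2v ω) /
        (μ1 (X ω) (A1v ω) * μ2 (X ω) (A1v ω) (A2v ω)) *
        (Y ω - qhat (X ω) (A1v ω) (A2v ω))) ∂Q
      = ∫ x, ∑ a1, π1 x a1 * ∑ a2 ∈ S x a1, π2 x a1 a2 * q x a1 a2 ∂P :=
  stmt7_general (m𝒳 := m𝒳) P S π1 π2 hπ1meas hπ2meas hπ1nn hπ1sum hπ2nn hπ2sum hπ2supp μ1 μ2 hμ1meas
    hμ2meas hμ1sum hμ2nn hμ2sum hμ1pos hμ2pos q hqmeas Cq hqbd qhat hqhatmeas Cqhat hqhatbd Q X A1v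
    A2v Y hX hA1v hA2v hYint hlaw hlawY Cw hwbd
end

section
/- Let Π be a nonempty finite set, let V, B : Π → ℝ with B(π) ≥ 0 for all π, let M > 0, ν̂ ∈ (0, 1), n ≥ 1, α ∈ (0, 1), λ ≥ 0, and Δ_V, Δ_B ≥ 0. Suppose that on a common probability space, for each π ∈ Π there are independent real random variables ψ̂_{π,1}, …, ψ̂_{π,n}, each taking values in [−M ν̂⁻², M(1 + ν̂⁻²)], whose averaged means satisfy |(1/n) Σ_{i=1}^n E[ψ̂_{π,i}] − V(π)| ≤ Δ_V, and independent real random variables b̂_{π,1}, …, b̂_{π,n}, each taking values in [0, ν̂⁻²], whose averaged means satisfy |(1/n) Σ_{i=1}^n E[b̂_{π,i}] − B(π)| ≤ Δ_B. Set V̂(π) = (1/n) Σ_i ψ̂_{π,i}, B̂(π) = (1/n) Σ_i b̂_{π,i}, r_V = M(1 + 2ν̂⁻²) √( log(4|Π|/α) / (2n) ), and r_B = ν̂⁻² √( log(4|Π|/α) / (2n) ). Let π* maximize V over Π and let π̂ maximize V̂(π) − λ B̂(π) over Π. Then, with probability at least 1 − α, simultaneously: sup_{π∈Π} |V̂(π)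 − V(π)| ≤ r_V + Δ_V; sup_{π∈Π} |B̂(π) − B(π)| ≤ r_B + Δ_B; and V(π*) − V(π̂) ≤ λ B(π*) + 2(r_V + Δ_V) + 2λ(r_B + Δ_B). -/
/-!
For each policy, Hoeffding's inequality (Mathlib's sub-Gaussian form) bounds by `α / (2 |Π|)` the
probability that the empirical score average leaves the band of radius `r_V` around its mean, and
likewise for the burden average and `r_B`; a union bound over the policies and the two estimators
bounds the bad event by `α`. Off it, the triangle inequality adds the biases `Δ_V`, `Δ_B`, and
comparing `π̂` with `π*` through the pessimistic objective gives the regret bound, because the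
estimated burden of `π̂` is nonnegative.
-/

open MeasureTheory ProbabilityTheory Real
open scoped NNReal

section Concentration

variable {Ω : Type*} [MeasurableSpace Ω] {μ : Measure Ω}

lemma ProbabilityTheory.HasSubgaussianMGF.measure_abs_ge_le [IsFiniteMeasure μ]
    {X : Ω → ℝ} {c : ℝ≥0} (h : HasSubgaussianMGF X c μ) {ε : ℝ} (hε : 0 ≤ ε) :
    μ.real {ω | ε ≤ |X ω|} ≤ 2 * exp (-ε ^ 2 / (2 * c)) :=
  calc μ.real {ω | ε ≤ |X ω|}
      ≤ μ.real ({ω | ε ≤ X ω} ∪ {ω | ε ≤ (-X) ω}) :=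
        measureReal_mono fun ω (hω : ε ≤ |X ω|) => by
          rcases le_abs'.1 hω with h | h
          · exact Or.inr (show ε ≤ -X ω by linarith)
          · exact Or.inl h
    _ ≤ μ.real {ω | ε ≤ X ω} + μ.real {ω | ε ≤ (-X) ω} := measureReal_union_le _ _
    _ ≤ exp (-ε ^ 2 / (2 * c)) + exp (-ε ^ 2 / (2 * c)) :=
        add_le_add (h.measure_ge_le hε) (h.neg.measure_ge_le hε)
    _ = 2 * exp (-ε ^ 2 / (2 * c)) := (two_mul _).symm

lemma measure_abs_sum_sub_integral_ge_le_of_iIndepFun [IsProbabilityMeasure μ] {ι : Type*}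
    [Fintype ι] {X : ι → Ω → ℝ} (hX : ∀ i, AEMeasurable (X i) μ) (hindep : iIndepFun X μ)
    {a b : ℝ} (hab : ∀ i, ∀ᵐ ω ∂μ, X i ω ∈ Set.Icc a b) {ε : ℝ} (hε : 0 ≤ ε) :
    μ.real {ω | ε ≤ |∑ i, (X i ω - μ[X i])|} ≤
      2 * exp (-2 * ε ^ 2 / (Fintype.card ι * (b - a) ^ 2)) := by
  have hcentered : iIndepFun (fun i ω => X i ω - μ[X i]) μ := by
    exact hindep.comp (fun i (x : ℝ) => x - μ[X i]) fun i => by fun_prop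
  have hsum := HasSubgaussianMGF.sum_of_iIndepFun hcentered (s := Finset.univ)
    fun i _ => hasSubgaussianMGF_of_mem_Icc (hX i) (hab i)
  have hvar : ((∑ _i : ι, (‖b - a‖₊ / 2) ^ 2 : ℝ≥0) : ℝ) = Fintype.card ι * (b - a) ^ 2 / 4 := by
    simp [div_pow, sq_abs]
    ring
  refine (hsum.measure_abs_ge_le hε).trans_eq ?_
  rw [hvar, show 2 * (Fintype.card ι * (b - a) ^ 2 / 4) = Fintype.card ι * (b - a) ^ 2 / 2 by ring,
    div_div_eq_mul_div]
  ring_nf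

lemma measure_abs_avg_sub_avg_integral_gt_le [IsProbabilityMeasure μ] {n : ℕ} (hn : 1 ≤ n)
    {X : Fin n → Ω → ℝ} (hX : ∀ i, AEMeasurable (X i) μ) (hindep : iIndepFun X μ) {a b : ℝ}
    (hab : a < b) (hX_mem : ∀ i, ∀ᵐ ω ∂μ, X i ω ∈ Set.Icc a b) {c : ℝ} (hc : 1 ≤ c) :
    μ.real {ω | (b - a) * √(log c / (2 * n)) <
      |(n : ℝ)⁻¹ * (∑ i, X i ω) - (n : ℝ)⁻¹ * (∑ i, μ[X i])|} ≤ 2 / c := by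
  have hn' : (0 : ℝ) < n := by exact_mod_cast hn
  have hq : 0 ≤ log c / (2 * n) := div_nonneg (log_nonneg hc) (by positivity)
  have hr : 0 ≤ n * ((b - a) * √(log c / (2 * n))) :=
    mul_nonneg hn'.le (mul_nonneg (sub_pos.2 hab).le (sqrt_nonneg _))
  calc _ ≤ μ.real {ω | n * ((b - a) * √(log c / (2 * n))) ≤ |∑ i, (X i ω - μ[X i])|} := by
        refine measureReal_mono fun ω hω => ?_
        simp only [Set.mem_ofPred_eq, ← mul_sub, ← Finset.sum_sub_distrib, abs_mul, abs_inv,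
          Nat.abs_cast] at hω ⊢
        exact ((lt_inv_mul_iff₀ hn').1 hω).le
    _ ≤ 2 * exp (-2 * (n * ((b - a) * √(log c / (2 * n)))) ^ 2 / (n * (b - a) ^ 2)) := by
        simpa using measure_abs_sum_sub_integral_ge_le_of_iIndepFun hX hindep hX_mem hr
    _ = 2 / c := by
        have hba : b - a ≠ 0 := (sub_pos.2 hab).ne'
        rw [mul_pow, mul_pow, sq_sqrt hq,
          show -2 * (n ^ 2 * ((b - a) ^ 2 * (log c / (2 * n)))) / (n * (b - a) ^ 2) = -log c by
            field_simp,
          exp_neg, exp_log (by linarith), div_eq_mul_inv]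

lemma measure_exists_abs_avg_sub_avg_integral_gt_le [IsProbabilityMeasure μ] {P : Type*}
    [Fintype P] {n : ℕ} (hn : 1 ≤ n) {X : P → Fin n → Ω → ℝ}
    (hX : ∀ p i, AEMeasurable (X p i) μ) (hindep : ∀ p, iIndepFun (X p) μ) {a b : ℝ}
    (hab : a < b) (hX_mem : ∀ p i, ∀ᵐ ω ∂μ, X p i ω ∈ Set.Icc a b) {c : ℝ} (hc : 1 ≤ c) :
    μ.real {ω | ∃ p, (b - a) * √(log c / (2 * n)) <
      |(n : ℝ)⁻¹ * (∑ i, X p i ω) - (n : ℝ)⁻¹ * (∑ i, μ[X p i])|} ≤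
      Fintype.card P * (2 / c) := by
  rw [Set.ofPred_exists]
  refine (measureReal_iUnion_fintype_le _).trans ?_
  simpa using Finset.sum_le_sum fun p (_ : p ∈ Finset.univ) =>
    measure_abs_avg_sub_avg_integral_gt_le hn (hX p) (hindep p) hab (hX_mem p) hc

lemma one_sub_le_measureReal_of_compl_subset [IsProbabilityMeasure μ] {s t : Set Ω} {δ : ℝ}
    (hs : μ.real s ≤ δ) (hst : sᶜ ⊆ t) : 1 - δ ≤ μ.real t := by
  have hcover : 1 ≤ μ.real s + μ.real t :=
    calc 1 = μ.real Set.univ := probReal_univ.symm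
      _ ≤ μ.real (s ∪ t) := measureReal_mono fun ω _ => (em (ω ∈ s)).imp_right (hst ·)
      _ ≤ μ.real s + μ.real t := measureReal_union_le s t
  linarith

end Concentration

lemma sub_le_of_pessimistic_max {P : Type*} {V B V' B' : P → ℝ} {lam εV εB : ℝ} (hlam : 0 ≤ lam)
    {p q : P} (hVp : |V' p - V p| ≤ εV) (hVq : |V' q - V q| ≤ εV) (hBp : |B' p - B p| ≤ εB)
    (hB'q : 0 ≤ B' q) (hq : V' p - lam * B' p ≤ V' q - lam * B' q) :
    V p - V q ≤ lam * B p + 2 * εV + 2 * lam * εB := by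
  have hpen_p : lam * B' p ≤ lam * (B p + εB) :=
    mul_le_mul_of_nonneg_left (by linarith [(abs_le.1 hBp).2]) hlam
  have hpen_q : 0 ≤ lam * B' q := mul_nonneg hlam hB'q
  have hεB : 0 ≤ lam * εB := mul_nonneg hlam ((abs_nonneg _).trans hBp)
  linarith [(abs_le.1 hVp).1, (abs_le.1 hVq).2]

theorem stmt13_general {Pol : Type*} [Fintype Pol] [Nonempty Pol]
    (V B : Pol → ℝ)
    (M νhat : ℝ) (hM : 0 < M) (hν0 : 0 < νhat)
    (n : ℕ) (hn : 1 ≤ n) (α : ℝ) (hα0 : 0 < α) (hα1 : α < 1)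
    (lam : ℝ) (hlam : 0 ≤ lam)
    (ΔV ΔB : ℝ)
    {Ω : Type*} [MeasurableSpace Ω] (Q : Measure Ω) [IsProbabilityMeasure Q]
    (ψ : Pol → Fin n → Ω → ℝ) (b : Pol → Fin n → Ω → ℝ)
    (hψmeas : ∀ p i, Measurable (ψ p i))
    (hbmeas : ∀ p i, Measurable (b p i))
    (hψindep : ∀ p, iIndepFun (ψ p) Q)
    (hbindep : ∀ p, iIndepFun (b p) Q)
    (hψrange : ∀ p i ω,
      -(M * (νhat ^ 2)⁻¹) ≤ ψ p i ω ∧ ψ p i ω ≤ M * (1 + (νhat ^ 2)⁻¹))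
    (hbrange : ∀ p i ω, 0 ≤ b p i ω ∧ b p i ω ≤ (νhat ^ 2)⁻¹)
    (hψmean : ∀ p, |(n : ℝ)⁻¹ * (∑ i, ∫ ω, ψ p i ω ∂Q) - V p| ≤ ΔV)
    (hbmean : ∀ p, |(n : ℝ)⁻¹ * (∑ i, ∫ ω, b p i ω ∂Q) - B p| ≤ ΔB)
    (pstar : Pol)
    (phat : Ω → Pol)
    (hphat : ∀ ω p,
      (n : ℝ)⁻¹ * (∑ i, ψ p i ω) - lam * ((n : ℝ)⁻¹ * (∑ i, b p i ω)) ≤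
      (n : ℝ)⁻¹ * (∑ i, ψ (phat ω) i ω) -
        lam * ((n : ℝ)⁻¹ * (∑ i, b (phat ω) i ω))) :
    (1 - α : ℝ) ≤
      (Q {ω |
        (∀ p, |(n : ℝ)⁻¹ * (∑ i, ψ p i ω) - V p| ≤
          M * (1 + 2 * (νhat ^ 2)⁻¹) *
            Real.sqrt (Real.log (4 * (Fintype.card Pol) / α) / (2 * n)) + ΔV) ∧
        (∀ p, |(n : ℝ)⁻¹ * (∑ i, b p i ω) - B p| ≤
          (νhat ^ 2)⁻¹ *
            Real.sqrt (Real.log (4 * (Fintype.card Pol) / α) / (2 * n)) + ΔB) ∧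
        V pstar - V (phat ω) ≤
          lam * B pstar +
          2 * (M * (1 + 2 * (νhat ^ 2)⁻¹) *
            Real.sqrt (Real.log (4 * (Fintype.card Pol) / α) / (2 * n)) + ΔV) +
          2 * lam * ((νhat ^ 2)⁻¹ *
            Real.sqrt (Real.log (4 * (Fintype.card Pol) / α) / (2 * n)) + ΔB)}).toReal := by
  have hK : (1 : ℝ) ≤ Fintype.card Pol := by exact_mod_cast Fintype.card_pos
  have hc : 1 ≤ 4 * (Fintype.card Pol : ℝ) / α := by rw [le_div_iff₀ hα0]; linarith
  have hν : 0 < (νhat ^ 2)⁻¹ := inv_pos.2 (pow_pos hν0 2)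
  have hdevψ := measure_exists_abs_avg_sub_avg_integral_gt_le hn
    (fun p i => (hψmeas p i).aemeasurable) hψindep (by nlinarith)
    (fun p i => ae_of_all _ (hψrange p i)) hc
  have hdevb := measure_exists_abs_avg_sub_avg_integral_gt_le hn
    (fun p i => (hbmeas p i).aemeasurable) hbindep hν (fun p i => ae_of_all _ (hbrange p i)) hc
  rw [show M * (1 + (νhat ^ 2)⁻¹) - -(M * (νhat ^ 2)⁻¹) = M * (1 + 2 * (νhat ^ 2)⁻¹) by ring]
    at hdevψ
  rw [sub_zero] at hdevb
  have hbad := (measureReal_union_le _ _).trans <|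
    (add_le_add hdevψ hdevb).trans_eq (show _ = α by field_simp; ring)
  refine one_sub_le_measureReal_of_compl_subset hbad fun ω hω => ?_
  simp only [Set.compl_union, Set.mem_inter_iff, Set.mem_compl_iff, Set.mem_ofPred_eq,
    not_exists, not_lt] at hω
  have hV p := (abs_sub_le _ _ _).trans (add_le_add (hω.1 p) (hψmean p))
  have hB p := (abs_sub_le _ _ _).trans (add_le_add (hω.2 p) (hbmean p))
  have hB'_nonneg : 0 ≤ (n : ℝ)⁻¹ * ∑ i, b (phat ω) i ω :=
    mul_nonneg (by positivity) (Finset.sum_nonneg fun i _ => (hbrange _ i ω).1)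
  exact ⟨hV, hB, sub_le_of_pessimistic_max (V' := fun p => (n : ℝ)⁻¹ * ∑ i, ψ p i ω)
    (B' := fun p => (n : ℝ)⁻¹ * ∑ i, b p i ω) hlam (hV pstar) (hV (phat ω)) (hB pstar)
    hB'_nonneg (hphat ω pstar)⟩

/-- **Finite-class CASP guarantee with reconstructed propensities.**
For each policy `p` in a finite nonempty library, the reconstructed-propensity
doubly robust scores `ψ p i` are independent with values in
`[-M ν̂⁻², M (1 + ν̂⁻²)]` and averaged means within `Δ_V` of `V p`, and the
reconstructed conditional burdens `b p i` are independent with values in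
`[0, ν̂⁻²]` and averaged means within `Δ_B` of `B p ≥ 0`. With
`r_V = M (1 + 2 ν̂⁻²) √(log(4 |Π| / α)/(2n))` and
`r_B = ν̂⁻² √(log(4 |Π| / α)/(2n))`, if `pstar` maximizes `V` and the (random)
pessimistic selector `phat` maximizes `V̂(p) - λ B̂(p)` pointwise, then with
probability at least `1 - α` simultaneously:
`sup_p |V̂(p) - V(p)| ≤ r_V + Δ_V`, `sup_p |B̂(p) - B(p)| ≤ r_B + Δ_B`, and
`V(pstar) - V(phat) ≤ λ B(pstar) + 2 (r_V + Δ_V) + 2 λ (r_B + Δ_B)`. -/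
theorem stmt13 {Pol : Type*} [Fintype Pol] [Nonempty Pol]
    (V B : Pol → ℝ) (hB : ∀ p, 0 ≤ B p)
    (M νhat : ℝ) (hM : 0 < M) (hν0 : 0 < νhat) (hν1 : νhat < 1)
    (n : ℕ) (hn : 1 ≤ n) (α : ℝ) (hα0 : 0 < α) (hα1 : α < 1)
    (lam : ℝ) (hlam : 0 ≤ lam)
    (ΔV ΔB : ℝ) (hΔV : 0 ≤ ΔV) (hΔB : 0 ≤ ΔB)
    {Ω : Type*} [MeasurableSpace Ω] (Q : Measure Ω) [IsProbabilityMeasure Q]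
    (ψ : Pol → Fin n → Ω → ℝ) (b : Pol → Fin n → Ω → ℝ)
    (hψmeas : ∀ p i, Measurable (ψ p i))
    (hbmeas : ∀ p i, Measurable (b p i))
    (hψindep : ∀ p, iIndepFun (ψ p) Q)
    (hbindep : ∀ p, iIndepFun (b p) Q)
    (hψrange : ∀ p i ω,
      -(M * (νhat ^ 2)⁻¹) ≤ ψ p i ω ∧ ψ p i ω ≤ M * (1 + (νhat ^ 2)⁻¹))
    (hbrange : ∀ p i ω, 0 ≤ b p i ω ∧ b p i ω ≤ (νhat ^ 2)⁻¹)
    (hψmean : ∀ p, |(n : ℝ)⁻¹ * (∑ i, ∫ ω, ψ p i ω ∂Q) - V p| ≤ ΔV)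
    (hbmean : ∀ p, |(n : ℝ)⁻¹ * (∑ i, ∫ ω, b p i ω ∂Q) - B p| ≤ ΔB)
    (pstar : Pol) (hstar : ∀ p, V p ≤ V pstar)
    (phat : Ω → Pol)
    (hphat : ∀ ω p,
      (n : ℝ)⁻¹ * (∑ i, ψ p i ω) - lam * ((n : ℝ)⁻¹ * (∑ i, b p i ω)) ≤
      (n : ℝ)⁻¹ * (∑ i, ψ (phat ω) i ω) -
        lam * ((n : ℝ)⁻¹ * (∑ i, b (phat ω) i ω))) :
    (1 - α : ℝ) ≤
      (Q {ω |
        (∀ p, |(n : ℝ)⁻¹ * (∑ i, ψ p i ω) - V p| ≤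
          M * (1 + 2 * (νhat ^ 2)⁻¹) *
            Real.sqrt (Real.log (4 * (Fintype.card Pol) / α) / (2 * n)) + ΔV) ∧
        (∀ p, |(n : ℝ)⁻¹ * (∑ i, b p i ω) - B p| ≤
          (νhat ^ 2)⁻¹ *
            Real.sqrt (Real.log (4 * (Fintype.card Pol) / α) / (2 * n)) + ΔB) ∧
        V pstar - V (phat ω) ≤
          lam * B pstar +
          2 * (M * (1 + 2 * (νhat ^ 2)⁻¹) *
            Real.sqrt (Real.log (4 * (Fintype.card Pol) / α) / (2 * n)) + ΔV) +
          2 * lam * ((νhat ^ 2)⁻¹ *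
            Real.sqrt (Real.log (4 * (Fintype.card Pol) / α) / (2 * n)) + ΔB)}).toReal :=
  stmt13_general V B M νhat hM hν0 n hn α hα0 hα1 lam hlam ΔV ΔB Q ψ b hψmeas hbmeas hψindep hbindep
    hψrange hbrange hψmean hbmean pstar phat hphat
end

section
/- Let π be a feasible policy, let e(x, a1, a2) = μ1(a1|x) μ2(a2|x, a1) denote the true joint logging propensity, and let q̂ and ê be fixed measurable functions on 𝒳 × A1 × A2 with ê(x, a1, a2) ≥ ν̂² > 0 for all x, a1 ∈ A1, and a2 ∈ S(x, a1). Suppose Y and the reward regression q are bounded and that the sup-norms ‖q̂ − q‖_∞ and ‖ê − e‖_∞, taken over the feasible support {(x, a1, a2) : a2 ∈ S(x, a1)}, are finite. Define the estimated-propensity doubly robust score ψ̂_π(O) = m_{q̂}(X; π) + [π1(A1|X) π2(A2|X, A1) / ê(X, A1, A2)] · (Y − q̂(X, A1, A2)), where m_{q̂}(x; π) = Σ_{a1∈A1} π1(a1|x) Σ_{a2∈S(x,a1)} π2(a2|x, a1) q̂(x, a1, a2). Then the conditional value bias satisfies |E[ψ̂_π(O)] − V(π)| ≤ ν̂⁻²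 · ‖q̂ − q‖_∞ · ‖ê − e‖_∞. -/
/-!
With `w = π1 π2` and `e = μ1 μ2` the joint target and logging weights of an action pair `a`,
conditioning on the logged pair turns `E[ψ̂]` into `E_P Σ_a e_a (m_q̂ + (w_a / ê_a) (q_a - q̂_a))`.
As `Σ_a e_a = 1`, subtracting `V(π) = E_P Σ_a w_a q_a` leaves
`E_P Σ_a w_a (q̂_a - q_a) (ê_a - e_a) / ê_a`, in which the two nuisance errors enter only through
their product. On the feasible support, which carries `w`, each such factor is at most
`‖q̂ - q‖_∞ ‖ê - e‖_∞ / ν̂²`, and `Σ_a w_a = 1`.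
-/

open MeasureTheory

section WeightedSums

variable {ι : Type*} [Fintype ι]

theorem le_one_of_sum_eq_one {w : ι → ℝ} (hw : ∀ i, 0 ≤ w i) (h1 : ∑ i, w i = 1) (i : ι) :
    w i ≤ 1 :=
  h1 ▸ Finset.single_le_sum (fun j _ => hw j) (Finset.mem_univ i)

theorem abs_mul_le_of_support {s : Set ι} {w f : ι → ℝ} {C : ℝ} (hw : ∀ i, 0 ≤ w i)
    (hw1 : ∑ i, w i = 1) (hws : ∀ i ∉ s, w i = 0) (hf : ∀ i ∈ s, |f i| ≤ C) (i : ι) :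
    |w i * f i| ≤ |C| := by
  by_cases hi : i ∈ s
  · rw [abs_mul, abs_of_nonneg (hw i)]
    exact (mul_le_of_le_one_left (abs_nonneg _) (le_one_of_sum_eq_one hw hw1 i)).trans
      ((hf i hi).trans (le_abs_self C))
  · simp [hws i hi]

theorem abs_sum_mul_le_of_support {s : Set ι} {w f : ι → ℝ} {C : ℝ} (hw : ∀ i, 0 ≤ w i)
    (hw1 : ∑ i, w i = 1) (hws : ∀ i ∉ s, w i = 0) (hf : ∀ i ∈ s, |f i| ≤ C) :
    |∑ i, w i * f i| ≤ C := by
  have hterm : ∀ i, |w i * f i| ≤ w i * C := fun i => by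
    by_cases hi : i ∈ s
    · rw [abs_mul, abs_of_nonneg (hw i)]
      exact mul_le_mul_of_nonneg_left (hf i hi) (hw i)
    · simp [hws i hi]
  calc |∑ i, w i * f i| ≤ ∑ i, |w i * f i| := Finset.abs_sum_le_sum_abs _ _
    _ ≤ ∑ i, w i * C := Finset.sum_le_sum fun i _ => hterm i
    _ = C := by rw [← Finset.sum_mul, hw1, one_mul]

theorem sum_dr_bias_eq {s : Set ι} (e w ehat q qhat : ι → ℝ) (he : ∑ i, e i = 1)
    (hws : ∀ i ∉ s, w i = 0) (hehat : ∀ i ∈ s, ehat i ≠ 0) :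
    ∑ i, e i * (∑ j, w j * qhat j + w i / ehat i * (q i - qhat i)) - ∑ i, w i * q i
      = ∑ i, w i * ((qhat i - q i) * (ehat i - e i) / ehat i) := by
  have hterm : ∀ i, w i * ((qhat i - q i) * (ehat i - e i) / ehat i)
      = w i * qhat i - w i * q i + e i * (w i / ehat i * (q i - qhat i)) := fun i => by
    by_cases hi : i ∈ s
    · field_simp [hehat i hi]
      ring
    · simp [hws i hi]
  simp only [hterm, mul_add, Finset.sum_add_distrib, Finset.sum_sub_distrib, ← Finset.sum_mul,
    he, one_mul]
  ring

theorem abs_sum_dr_bias_le {s : Set ι} {e w ehat q qhat : ι → ℝ} {c Δq Δe : ℝ} (hc : 0 < c)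
    (he : ∑ i, e i = 1) (hw : ∀ i, 0 ≤ w i) (hw1 : ∑ i, w i = 1) (hws : ∀ i ∉ s, w i = 0)
    (hehat : ∀ i ∈ s, c ≤ ehat i) (hΔq : ∀ i ∈ s, |qhat i - q i| ≤ Δq)
    (hΔe : ∀ i ∈ s, |ehat i - e i| ≤ Δe) :
    |∑ i, e i * (∑ j, w j * qhat j + w i / ehat i * (q i - qhat i)) - ∑ i, w i * q i|
      ≤ c⁻¹ * Δq * Δe := by
  rw [sum_dr_bias_eq e w ehat q qhat he hws fun i hi => (hc.trans_le (hehat i hi)).ne']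
  refine abs_sum_mul_le_of_support hw hw1 hws fun i hi => ?_
  have hnum : |qhat i - q i| * |ehat i - e i| ≤ Δq * Δe :=
    mul_le_mul (hΔq i hi) (hΔe i hi) (abs_nonneg _) ((abs_nonneg _).trans (hΔq i hi))
  rw [abs_div, abs_mul, abs_of_pos (hc.trans_le (hehat i hi))]
  calc |qhat i - q i| * |ehat i - e i| / ehat i ≤ Δq * Δe / c :=
        div_le_div₀ ((mul_nonneg (abs_nonneg _) (abs_nonneg _)).trans hnum) hnum hc (hehat i hi)
    _ = c⁻¹ * Δq * Δe := by ring

end WeightedSums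

section ActionPairs

variable {A1 A2 : Type*} [Fintype A1] [Fintype A2]

theorem sum_mul_sum_eq_sum_prod_of_support {S : A1 → Finset A2} {π1 : A1 → ℝ}
    {π2 : A1 → A2 → ℝ} (h : ∀ a1 a2, a2 ∉ S a1 → π2 a1 a2 = 0) (f : A1 → A2 → ℝ) :
    ∑ a1, π1 a1 * ∑ a2 ∈ S a1, π2 a1 a2 * f a1 a2
      = ∑ p : A1 × A2, π1 p.1 * π2 p.1 p.2 * f p.1 p.2 := by
  rw [Fintype.sum_prod_type]
  refine Finset.sum_congr rfl fun a1 _ => ?_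
  rw [Finset.sum_subset (Finset.subset_univ _) fun a2 _ ha2 => by rw [h a1 a2 ha2, zero_mul],
    Finset.mul_sum]
  simp only [mul_assoc]

theorem sum_prod_mul_eq_one_s14 {π1 : A1 → ℝ} {π2 : A1 → A2 → ℝ} (h1 : ∑ a1, π1 a1 = 1)
    (h2 : ∀ a1, ∑ a2, π2 a1 a2 = 1) : ∑ p : A1 × A2, π1 p.1 * π2 p.1 p.2 = 1 := by
  simp [Fintype.sum_prod_type, ← Finset.mul_sum, h2, h1]

theorem add_mul_sub_eq_sum_ite [DecidableEq A1] [DecidableEq A2] (m y : ℝ)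
    (H qh : A1 → A2 → ℝ) (a1 : A1) (a2 : A2) :
    m + H a1 a2 * (y - qh a1 a2) = ∑ p : A1 × A2,
      ((if a1 = p.1 ∧ a2 = p.2 then y * H p.1 p.2 else 0) +
        if a1 = p.1 ∧ a2 = p.2 then m - H p.1 p.2 * qh p.1 p.2 else 0) := by
  rw [Finset.sum_eq_single_of_mem (a1, a2) (Finset.mem_univ _) fun p _ hp => by
    rw [if_neg, if_neg, add_zero] <;> exact fun h => hp (Prod.ext h.1.symm h.2.symm),
    if_pos ⟨rfl, rfl⟩, if_pos ⟨rfl, rfl⟩]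
  ring

end ActionPairs

theorem abs_integral_sub_le_of_abs_sub_le {α : Type*} [MeasurableSpace α] {μ : Measure α}
    [IsProbabilityMeasure μ] {f g : α → ℝ} {K : ℝ} (hf : AEStronglyMeasurable f μ)
    (hg : Integrable g μ) (hfg : ∀ x, |f x - g x| ≤ K) :
    |∫ x, f x ∂μ - ∫ x, g x ∂μ| ≤ K := by
  have hbound : ∀ᵐ x ∂μ, ‖f x - g x‖ ≤ K := .of_forall hfg
  have hdiff : Integrable (fun x => f x - g x) μ := .of_bound (hf.sub hg.1) K hbound
  rw [← integral_sub ((hdiff.add hg).congr (.of_forall fun x => sub_add_cancel (f x) (g x))) hg]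
  simpa using norm_integral_le_of_norm_le_const hbound

theorem integrable_ite_of_integrable {α : Type*} [MeasurableSpace α] {μ : Measure α}
    {p : α → Prop} [DecidablePred p] {f : α → ℝ} (hp : MeasurableSet {a | p a})
    (hf : Integrable f μ) : Integrable (fun a => if p a then f a else 0) μ := by
  refine (hf.indicator hp).congr (.of_forall fun a => ?_)
  simp [Set.indicator_apply]

section LoggedData

variable {𝒳 Ω A1 A2 : Type*} [MeasurableSpace 𝒳] [MeasurableSpace Ω]
  [Fintype A1] [Fintype A2] [DecidableEq A1] [DecidableEq A2]
  [MeasurableSpace A1] [MeasurableSpace A2]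

structure IsLoggedSample (P : Measure 𝒳) (Q : Measure Ω) (X : Ω → 𝒳) (A1v : Ω → A1)
    (A2v : Ω → A2) (Y : Ω → ℝ) (e q : 𝒳 → A1 → A2 → ℝ) : Prop where
  measurable_X : Measurable X
  measurable_A1 : Measurable A1v
  measurable_A2 : Measurable A2v
  measurable_Y : Measurable Y
  ae_bdd_Y : ∃ C, ∀ᵐ ω ∂Q, |Y ω| ≤ C
  measurable_e : ∀ a1 a2, Measurable fun x => e x a1 a2
  e_nonneg : ∀ x a1 a2, 0 ≤ e x a1 a2
  sum_e : ∀ x, ∑ p : A1 × A2, e x p.1 p.2 = 1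
  measurable_q : ∀ a1 a2, Measurable fun x => q x a1 a2
  bdd_q : ∃ C, ∀ x a1 a2, |q x a1 a2| ≤ C
  integral_ite : ∀ (a1 : A1) (a2 : A2) (h : 𝒳 → ℝ), Measurable h → (∃ C, ∀ x, |h x| ≤ C) →
    ∫ ω, (if A1v ω = a1 ∧ A2v ω = a2 then h (X ω) else 0) ∂Q = ∫ x, e x a1 a2 * h x ∂P
  integral_ite_mul : ∀ (a1 : A1) (a2 : A2) (h : 𝒳 → ℝ), Measurable h →
    (∃ C, ∀ x, |h x| ≤ C) →
    ∫ ω, (if A1v ω = a1 ∧ A2v ω = a2 then Y ω * h (X ω) else 0) ∂Q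
      = ∫ x, e x a1 a2 * q x a1 a2 * h x ∂P

namespace IsLoggedSample

variable {P : Measure 𝒳} {Q : Measure Ω} {X : Ω → 𝒳} {A1v : Ω → A1} {A2v : Ω → A2} {Y : Ω → ℝ}
  {e q : 𝒳 → A1 → A2 → ℝ} {h g : 𝒳 → ℝ} {Ch Cg : ℝ}

theorem abs_e_le_one (hO : IsLoggedSample P Q X A1v A2v Y e q) (x : 𝒳) (a1 : A1) (a2 : A2) :
    |e x a1 a2| ≤ 1 := by
  rw [abs_of_nonneg (hO.e_nonneg x a1 a2)]
  exact le_one_of_sum_eq_one (fun p => hO.e_nonneg x p.1 p.2) (hO.sum_e x) (a1, a2)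

theorem measurableSet_action [MeasurableSingletonClass A1] [MeasurableSingletonClass A2]
    (hO : IsLoggedSample P Q X A1v A2v Y e q) (a1 : A1) (a2 : A2) :
    MeasurableSet {ω | A1v ω = a1 ∧ A2v ω = a2} :=
  (hO.measurable_A1 (measurableSet_singleton a1)).inter
    (hO.measurable_A2 (measurableSet_singleton a2))

theorem integrable_e_mul (hO : IsLoggedSample P Q X A1v A2v Y e q) (hg : Integrable g P)
    (a1 : A1) (a2 : A2) : Integrable (fun x => e x a1 a2 * g x) P :=
  hg.bdd_mul (hO.measurable_e a1 a2).aestronglyMeasurable (.of_forall (hO.abs_e_le_one · a1 a2))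

theorem integrable_e_mul_q_mul [IsFiniteMeasure P] (hO : IsLoggedSample P Q X A1v A2v Y e q)
    (hh : Measurable h) (hhC : ∀ x, |h x| ≤ Ch) (a1 : A1) (a2 : A2) :
    Integrable (fun x => e x a1 a2 * q x a1 a2 * h x) P := by
  obtain ⟨Cq, hqC⟩ := hO.bdd_q
  refine (hO.integrable_e_mul ?_ a1 a2).mul_bdd hh.aestronglyMeasurable (.of_forall hhC)
  exact .of_bound (hO.measurable_q a1 a2).aestronglyMeasurable Cq (.of_forall (hqC · a1 a2))

variable [MeasurableSingletonClass A1] [MeasurableSingletonClass A2]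

theorem integrable_ite [IsFiniteMeasure Q] (hO : IsLoggedSample P Q X A1v A2v Y e q)
    (hg : Measurable g) (hgC : ∀ x, |g x| ≤ Cg) (a1 : A1) (a2 : A2) :
    Integrable (fun ω => if A1v ω = a1 ∧ A2v ω = a2 then g (X ω) else 0) Q :=
  integrable_ite_of_integrable (hO.measurableSet_action a1 a2) <|
    .of_bound (hg.comp hO.measurable_X).aestronglyMeasurable Cg (.of_forall fun ω => hgC (X ω))

theorem integrable_ite_mul [IsFiniteMeasure Q] (hO : IsLoggedSample P Q X A1v A2v Y e q)
    (hh : Measurable h) (hhC : ∀ x, |h x| ≤ Ch) (a1 : A1) (a2 : A2) :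
    Integrable (fun ω => if A1v ω = a1 ∧ A2v ω = a2 then Y ω * h (X ω) else 0) Q := by
  obtain ⟨CY, hYC⟩ := hO.ae_bdd_Y
  refine integrable_ite_of_integrable (hO.measurableSet_action a1 a2) ?_
  exact (Integrable.of_bound hO.measurable_Y.aestronglyMeasurable CY (by simpa using hYC)).mul_bdd
    (hh.comp hO.measurable_X).aestronglyMeasurable (.of_forall fun ω => hhC (X ω))

theorem integral_ite_add_eq [IsFiniteMeasure P] [IsFiniteMeasure Q]
    (hO : IsLoggedSample P Q X A1v A2v Y e q) (hh : Measurable h) (hhC : ∀ x, |h x| ≤ Ch)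
    (hg : Measurable g) (hgC : ∀ x, |g x| ≤ Cg) (a1 : A1) (a2 : A2) :
    ∫ ω, ((if A1v ω = a1 ∧ A2v ω = a2 then Y ω * h (X ω) else 0) +
        if A1v ω = a1 ∧ A2v ω = a2 then g (X ω) else 0) ∂Q
      = ∫ x, e x a1 a2 * q x a1 a2 * h x + e x a1 a2 * g x ∂P := by
  rw [integral_add (hO.integrable_ite_mul hh hhC a1 a2) (hO.integrable_ite hg hgC a1 a2),
    hO.integral_ite_mul a1 a2 h hh ⟨Ch, hhC⟩, hO.integral_ite a1 a2 g hg ⟨Cg, hgC⟩,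
    integral_add (hO.integrable_e_mul_q_mul hh hhC a1 a2)
      (hO.integrable_e_mul (.of_bound hg.aestronglyMeasurable Cg (.of_forall hgC)) a1 a2)]

theorem integral_dr_score_eq [IsFiniteMeasure P] [IsFiniteMeasure Q]
    (hO : IsLoggedSample P Q X A1v A2v Y e q) {M : 𝒳 → ℝ} {H qh : 𝒳 → A1 → A2 → ℝ}
    {CM CH CHq : ℝ} (hM : Measurable M) (hMC : ∀ x, |M x| ≤ CM)
    (hH : ∀ a1 a2, Measurable fun x => H x a1 a2) (hHC : ∀ x a1 a2, |H x a1 a2| ≤ CH)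
    (hqh : ∀ a1 a2, Measurable fun x => qh x a1 a2)
    (hHqhC : ∀ x a1 a2, |H x a1 a2 * qh x a1 a2| ≤ CHq) :
    ∫ ω, (M (X ω) + H (X ω) (A1v ω) (A2v ω) * (Y ω - qh (X ω) (A1v ω) (A2v ω))) ∂Q
      = ∫ x, ∑ p : A1 × A2,
          e x p.1 p.2 * (M x + H x p.1 p.2 * (q x p.1 p.2 - qh x p.1 p.2)) ∂P := by
  set g : A1 × A2 → 𝒳 → ℝ := fun p x => M x - H x p.1 p.2 * qh x p.1 p.2
  have hg : ∀ p, Measurable (g p) := fun p => hM.sub ((hH p.1 p.2).mul (hqh p.1 p.2))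
  have hgC : ∀ p x, |g p x| ≤ CM + CHq := fun p x =>
    (abs_sub _ _).trans (add_le_add (hMC x) (hHqhC x p.1 p.2))
  have hterm : ∀ (p : A1 × A2) x, e x p.1 p.2 * q x p.1 p.2 * H x p.1 p.2 + e x p.1 p.2 * g p x
      = e x p.1 p.2 * (M x + H x p.1 p.2 * (q x p.1 p.2 - qh x p.1 p.2)) := fun p x => by
    simp only [g]
    ring
  calc _ = ∫ ω, ∑ p : A1 × A2, ((if A1v ω = p.1 ∧ A2v ω = p.2 then Y ω * H (X ω) p.1 p.2 else 0)
          + if A1v ω = p.1 ∧ A2v ω = p.2 then g p (X ω) else 0) ∂Q :=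
        integral_congr_ae (.of_forall fun ω => add_mul_sub_eq_sum_ite _ _ _ _ _ _)
    _ = ∑ p : A1 × A2, ∫ x, e x p.1 p.2 * q x p.1 p.2 * H x p.1 p.2 + e x p.1 p.2 * g p x ∂P :=
        (integral_finsetSum _ fun p _ => (hO.integrable_ite_mul (hH p.1 p.2) (hHC · p.1 p.2)
          p.1 p.2).add (hO.integrable_ite (hg p) (hgC p) p.1 p.2)).trans <|
        Finset.sum_congr rfl fun p _ =>
          hO.integral_ite_add_eq (hH p.1 p.2) (hHC · p.1 p.2) (hg p) (hgC p) p.1 p.2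
    _ = ∫ x, ∑ p : A1 × A2, (e x p.1 p.2 * q x p.1 p.2 * H x p.1 p.2 + e x p.1 p.2 * g p x) ∂P :=
        (integral_finsetSum _ fun p _ => (hO.integrable_e_mul_q_mul (hH p.1 p.2) (hHC · p.1 p.2)
          p.1 p.2).add (hO.integrable_e_mul
            (.of_bound (hg p).aestronglyMeasurable _ (.of_forall (hgC p))) p.1 p.2)).symm
    _ = _ := by simp only [hterm]

theorem integral_dr_score_eq_of_support [IsFiniteMeasure P] [IsFiniteMeasure Q]
    (hO : IsLoggedSample P Q X A1v A2v Y e q) {s : 𝒳 → Set (A1 × A2)}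
    {w ehat qhat : 𝒳 → A1 → A2 → ℝ} {c Δq : ℝ}
    (hw : ∀ a1 a2, Measurable fun x => w x a1 a2) (hw0 : ∀ x a1 a2, 0 ≤ w x a1 a2)
    (hw1 : ∀ x, ∑ p : A1 × A2, w x p.1 p.2 = 1) (hws : ∀ x, ∀ p ∉ s x, w x p.1 p.2 = 0)
    (hehat : ∀ a1 a2, Measurable fun x => ehat x a1 a2) (hc : 0 < c)
    (hehatlb : ∀ x, ∀ p ∈ s x, c ≤ ehat x p.1 p.2)
    (hqhat : ∀ a1 a2, Measurable fun x => qhat x a1 a2)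
    (hΔq : ∀ x, ∀ p ∈ s x, |qhat x p.1 p.2 - q x p.1 p.2| ≤ Δq) :
    ∫ ω, ((∑ p : A1 × A2, w (X ω) p.1 p.2 * qhat (X ω) p.1 p.2) +
        w (X ω) (A1v ω) (A2v ω) / ehat (X ω) (A1v ω) (A2v ω) *
          (Y ω - qhat (X ω) (A1v ω) (A2v ω))) ∂Q
      = ∫ x, ∑ p : A1 × A2, e x p.1 p.2 * ((∑ j : A1 × A2, w x j.1 j.2 * qhat x j.1 j.2) +
          w x p.1 p.2 / ehat x p.1 p.2 * (q x p.1 p.2 - qhat x p.1 p.2)) ∂P := by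
  obtain ⟨Cq, hqC⟩ := hO.bdd_q
  have hehat_pos : ∀ x, ∀ p ∈ s x, 0 < ehat x p.1 p.2 := fun x p hp =>
    hc.trans_le (hehatlb x p hp)
  have hqhatC : ∀ x, ∀ p ∈ s x, |qhat x p.1 p.2| ≤ Cq + Δq := fun x p hp => by
    linarith [abs_sub_abs_le_abs_sub (qhat x p.1 p.2) (q x p.1 p.2), hqC x p.1 p.2, hΔq x p hp]
  refine hO.integral_dr_score_eq (M := fun x => ∑ p : A1 × A2, w x p.1 p.2 * qhat x p.1 p.2)
    (H := fun x a1 a2 => w x a1 a2 / ehat x a1 a2) (by fun_prop)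
    (fun x => abs_sum_mul_le_of_support (fun p => hw0 x p.1 p.2) (hw1 x) (hws x) (hqhatC x))
    (by fun_prop) (CH := |c⁻¹|) (fun x a1 a2 => ?_) hqhat (CHq := |(Cq + Δq) / c|)
    (fun x a1 a2 => ?_)
  · rw [div_eq_mul_inv]
    refine abs_mul_le_of_support (fun p => hw0 x p.1 p.2) (hw1 x) (hws x)
      (f := fun p => (ehat x p.1 p.2)⁻¹) (fun p hp => ?_) (a1, a2)
    rw [abs_inv, abs_of_pos (hehat_pos x p hp)]
    exact inv_anti₀ hc (hehatlb x p hp)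
  · rw [div_mul_eq_mul_div, mul_div_assoc]
    refine abs_mul_le_of_support (fun p => hw0 x p.1 p.2) (hw1 x) (hws x)
      (f := fun p => qhat x p.1 p.2 / ehat x p.1 p.2) (fun p hp => ?_) (a1, a2)
    rw [abs_div, abs_of_pos (hehat_pos x p hp)]
    exact div_le_div₀ ((abs_nonneg _).trans (hqhatC x p hp)) (hqhatC x p hp) hc (hehatlb x p hp)

end IsLoggedSample

end LoggedData

theorem stmt14_general
    {𝒳 : Type*} [m𝒳 : MeasurableSpace 𝒳] (P : Measure 𝒳) [IsProbabilityMeasure P]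
    {A1 A2 : Type*} [Fintype A1] [Fintype A2]
    [DecidableEq A1] [DecidableEq A2]
    [MeasurableSpace A1] [MeasurableSingletonClass A1]
    [MeasurableSpace A2] [MeasurableSingletonClass A2]
    (S : 𝒳 → A1 → Finset A2)
    (π1 : 𝒳 → A1 → ℝ) (π2 : 𝒳 → A1 → A2 → ℝ)
    (hπ1meas : ∀ a1, Measurable fun x => π1 x a1)
    (hπ2meas : ∀ a1 a2, Measurable fun x => π2 x a1 a2)
    (hπ1nn : ∀ x a1, 0 ≤ π1 x a1) (hπ1sum : ∀ x, ∑ a1, π1 x a1 = 1)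
    (hπ2nn : ∀ x a1 a2, 0 ≤ π2 x a1 a2) (hπ2sum : ∀ x a1, ∑ a2, π2 x a1 a2 = 1)
    (hπ2supp : ∀ x a1 a2, a2 ∉ S x a1 → π2 x a1 a2 = 0)
    (μ1 : 𝒳 → A1 → ℝ) (μ2 : 𝒳 → A1 → A2 → ℝ)
    (hμ1meas : ∀ a1, Measurable fun x => μ1 x a1)
    (hμ2meas : ∀ a1 a2, Measurable fun x => μ2 x a1 a2)
    (hμ1nn : ∀ x a1, 0 ≤ μ1 x a1) (hμ1sum : ∀ x, ∑ a1, μ1 x a1 = 1)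
    (hμ2nn : ∀ x a1 a2, 0 ≤ μ2 x a1 a2) (hμ2sum : ∀ x a1, ∑ a2, μ2 x a1 a2 = 1)
    (q : 𝒳 → A1 → A2 → ℝ)
    (hqmeas : ∀ a1 a2, Measurable fun x => q x a1 a2)
    (Cq : ℝ) (hqbd : ∀ x a1 a2, |q x a1 a2| ≤ Cq)
    (qhat : 𝒳 → A1 → A2 → ℝ)
    (hqhatmeas : ∀ a1 a2, Measurable fun x => qhat x a1 a2)
    (ehat : 𝒳 → A1 → A2 → ℝ)
    (hehatmeas : ∀ a1 a2, Measurable fun x => ehat x a1 a2)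
    (νhat : ℝ) (hν : 0 < νhat)
    (hehatlb : ∀ x a1, ∀ a2 ∈ S x a1, νhat ^ 2 ≤ ehat x a1 a2)
    (hqgap : BddAbove {r : ℝ | ∃ x a1 a2, a2 ∈ S x a1 ∧
      r = |qhat x a1 a2 - q x a1 a2|})
    (hegap : BddAbove {r : ℝ | ∃ x a1 a2, a2 ∈ S x a1 ∧
      r = |ehat x a1 a2 - μ1 x a1 * μ2 x a1 a2|})
    {Ω : Type*} [MeasurableSpace Ω] (Q : Measure Ω) [IsProbabilityMeasure Q]
    (X : Ω → 𝒳) (A1v : Ω → A1) (A2v : Ω → A2) (Y : Ω → ℝ)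
    (hX : Measurable X) (hA1v : Measurable A1v) (hA2v : Measurable A2v)
    (hYm : Measurable Y)
    (CY : ℝ) (hYbd : ∀ᵐ ω ∂Q, |Y ω| ≤ CY)
    (hlaw : ∀ (a1 : A1) (a2 : A2) (h : 𝒳 → ℝ), Measurable h →
      (∃ C, ∀ x, |h x| ≤ C) →
      ∫ ω, (if A1v ω = a1 ∧ A2v ω = a2 then h (X ω) else 0) ∂Q
        = ∫ x, μ1 x a1 * μ2 x a1 a2 * h x ∂P)
    (hlawY : ∀ (a1 : A1) (a2 : A2) (h : 𝒳 → ℝ), Measurable h →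
      (∃ C, ∀ x, |h x| ≤ C) →
      ∫ ω, (if A1v ω = a1 ∧ A2v ω = a2 then Y ω * h (X ω) else 0) ∂Q
        = ∫ x, μ1 x a1 * μ2 x a1 a2 * q x a1 a2 * h x ∂P) :
    |(∫ ω, ((∑ a1, π1 (X ω) a1 *
          ∑ a2 ∈ S (X ω) a1, π2 (X ω) a1 a2 * qhat (X ω) a1 a2) +
        π1 (X ω) (A1v ω) * π2 (X ω) (A1v ω) (A2v ω) /
          ehat (X ω) (A1v ω) (A2v ω) *
          (Y ω - qhat (X ω) (A1v ω) (A2v ω))) ∂Q) -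
      ∫ x, ∑ a1, π1 x a1 * ∑ a2 ∈ S x a1, π2 x a1 a2 * q x a1 a2 ∂P|
    ≤ (νhat ^ 2)⁻¹ *
        sSup {r : ℝ | ∃ x a1 a2, a2 ∈ S x a1 ∧
          r = |qhat x a1 a2 - q x a1 a2|} *
        sSup {r : ℝ | ∃ x a1 a2, a2 ∈ S x a1 ∧
          r = |ehat x a1 a2 - μ1 x a1 * μ2 x a1 a2|} := by
  have hO : IsLoggedSample P Q X A1v A2v Y (fun x a1 a2 => μ1 x a1 * μ2 x a1 a2) q :=
    ⟨hX, hA1v, hA2v, hYm, ⟨CY, hYbd⟩, by fun_prop,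
      fun x a1 a2 => mul_nonneg (hμ1nn x a1) (hμ2nn x a1 a2),
      fun x => sum_prod_mul_eq_one_s14 (hμ1sum x) (hμ2sum x), hqmeas, ⟨Cq, hqbd⟩, hlaw, hlawY⟩
  have hw0 : ∀ x a1 a2, 0 ≤ π1 x a1 * π2 x a1 a2 := fun x a1 a2 =>
    mul_nonneg (hπ1nn x a1) (hπ2nn x a1 a2)
  have hw1 : ∀ x, ∑ p : A1 × A2, π1 x p.1 * π2 x p.1 p.2 = 1 := fun x =>
    sum_prod_mul_eq_one_s14 (hπ1sum x) (hπ2sum x)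
  have hws : ∀ x, ∀ p ∉ {p : A1 × A2 | p.2 ∈ S x p.1}, π1 x p.1 * π2 x p.1 p.2 = 0 :=
    fun x p hp => by rw [hπ2supp x p.1 p.2 hp, mul_zero]
  set Δq := sSup {r : ℝ | ∃ x a1 a2, a2 ∈ S x a1 ∧ r = |qhat x a1 a2 - q x a1 a2|}
  set Δe := sSup {r : ℝ | ∃ x a1 a2, a2 ∈ S x a1 ∧ r = |ehat x a1 a2 - μ1 x a1 * μ2 x a1 a2|}
  have hΔq : ∀ x, ∀ p ∈ {p : A1 × A2 | p.2 ∈ S x p.1}, |qhat x p.1 p.2 - q x p.1 p.2| ≤ Δq :=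
    fun x p hp => le_csSup hqgap ⟨x, p.1, p.2, hp, rfl⟩
  have hΔe : ∀ x, ∀ p ∈ {p : A1 × A2 | p.2 ∈ S x p.1},
      |ehat x p.1 p.2 - μ1 x p.1 * μ2 x p.1 p.2| ≤ Δe :=
    fun x p hp => le_csSup hegap ⟨x, p.1, p.2, hp, rfl⟩
  have hν2 : 0 < νhat ^ 2 := pow_pos hν 2
  simp only [sum_mul_sum_eq_sum_prod_of_support (hπ2supp _)]
  rw [hO.integral_dr_score_eq_of_support (w := fun x a1 a2 => π1 x a1 * π2 x a1 a2)
    (by fun_prop) hw0 hw1 hws hehatmeas hν2 (fun x p => hehatlb x p.1 p.2) hqhatmeas hΔq]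
  refine abs_integral_sub_le_of_abs_sub_le (by fun_prop : Measurable _).aestronglyMeasurable ?_
    fun x => abs_sum_dr_bias_le hν2 (hO.sum_e x) (fun p => hw0 x p.1 p.2) (hw1 x) (hws x)
      (fun p => hehatlb x p.1 p.2) (hΔq x) (hΔe x)
  exact .of_bound (by fun_prop : Measurable _).aestronglyMeasurable Cq <| .of_forall fun x =>
    abs_sum_mul_le_of_support (fun p => hw0 x p.1 p.2) (hw1 x) (hws x) fun p _ => hqbd x p.1 p.2

/-- **Product-error structure of the doubly robust value bias.**
Let `π` be a feasible policy, `e(x,a1,a2) = μ1(a1|x) μ2(a2|x,a1)` the true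
joint logging propensity, and `q̂`, `ê` fixed measurable nuisance fits with
`ê ≥ ν̂² > 0` on the feasible support. Suppose `Y` and the reward regression
`q` are bounded and the sup-norms `‖q̂ - q‖_∞` and `‖ê - e‖_∞` over the
feasible support (formalized as `sSup` of the corresponding sets of absolute
deviations, assumed bounded above) are finite. Then the estimated-propensity
doubly robust score
`ψ̂_π(O) = m_q̂(X; π) + (π1(A1|X) π2(A2|X,A1) / ê(X,A1,A2)) (Y - q̂(X,A1,A2))`
has value bias `|E[ψ̂_π(O)] - V(π)| ≤ ν̂⁻² ‖q̂ - q‖_∞ ‖ê - e‖_∞`. -/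
theorem stmt14
    {𝒳 : Type*} [m𝒳 : MeasurableSpace 𝒳] (P : Measure 𝒳) [IsProbabilityMeasure P]
    {A1 A2 : Type*} [Fintype A1] [Nonempty A1] [Fintype A2] [Nonempty A2]
    [DecidableEq A1] [DecidableEq A2]
    [MeasurableSpace A1] [MeasurableSingletonClass A1]
    [MeasurableSpace A2] [MeasurableSingletonClass A2]
    (S : 𝒳 → A1 → Finset A2) (hS : ∀ x a1, (S x a1).Nonempty)
    (hSmeas : ∀ (a1 : A1) (a2 : A2), MeasurableSet {x | a2 ∈ S x a1})
    (π1 : 𝒳 → A1 → ℝ) (π2 : 𝒳 → A1 → A2 → ℝ)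
    (hπ1meas : ∀ a1, Measurable fun x => π1 x a1)
    (hπ2meas : ∀ a1 a2, Measurable fun x => π2 x a1 a2)
    (hπ1nn : ∀ x a1, 0 ≤ π1 x a1) (hπ1sum : ∀ x, ∑ a1, π1 x a1 = 1)
    (hπ2nn : ∀ x a1 a2, 0 ≤ π2 x a1 a2) (hπ2sum : ∀ x a1, ∑ a2, π2 x a1 a2 = 1)
    (hπ2supp : ∀ x a1 a2, a2 ∉ S x a1 → π2 x a1 a2 = 0)
    (μ1 : 𝒳 → A1 → ℝ) (μ2 : 𝒳 → A1 → A2 → ℝ)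
    (hμ1meas : ∀ a1, Measurable fun x => μ1 x a1)
    (hμ2meas : ∀ a1 a2, Measurable fun x => μ2 x a1 a2)
    (hμ1nn : ∀ x a1, 0 ≤ μ1 x a1) (hμ1sum : ∀ x, ∑ a1, μ1 x a1 = 1)
    (hμ2nn : ∀ x a1 a2, 0 ≤ μ2 x a1 a2) (hμ2sum : ∀ x a1, ∑ a2, μ2 x a1 a2 = 1)
    (hμ2supp : ∀ x a1 a2, a2 ∉ S x a1 → μ2 x a1 a2 = 0)
    (hμ1pos : ∀ x a1, 0 < μ1 x a1)
    (hμ2pos : ∀ x a1 a2, a2 ∈ S x a1 → 0 < μ2 x a1 a2)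
    (q : 𝒳 → A1 → A2 → ℝ)
    (hqmeas : ∀ a1 a2, Measurable fun x => q x a1 a2)
    (Cq : ℝ) (hqbd : ∀ x a1 a2, |q x a1 a2| ≤ Cq)
    (qhat : 𝒳 → A1 → A2 → ℝ)
    (hqhatmeas : ∀ a1 a2, Measurable fun x => qhat x a1 a2)
    (ehat : 𝒳 → A1 → A2 → ℝ)
    (hehatmeas : ∀ a1 a2, Measurable fun x => ehat x a1 a2)
    (νhat : ℝ) (hν : 0 < νhat)
    (hehatlb : ∀ x a1, ∀ a2 ∈ S x a1, νhat ^ 2 ≤ ehat x a1 a2)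
    (hqgap : BddAbove {r : ℝ | ∃ x a1 a2, a2 ∈ S x a1 ∧
      r = |qhat x a1 a2 - q x a1 a2|})
    (hegap : BddAbove {r : ℝ | ∃ x a1 a2, a2 ∈ S x a1 ∧
      r = |ehat x a1 a2 - μ1 x a1 * μ2 x a1 a2|})
    {Ω : Type*} [MeasurableSpace Ω] (Q : Measure Ω) [IsProbabilityMeasure Q]
    (X : Ω → 𝒳) (A1v : Ω → A1) (A2v : Ω → A2) (Y : Ω → ℝ)
    (hX : Measurable X) (hA1v : Measurable A1v) (hA2v : Measurable A2v)
    (hYm : Measurable Y)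
    (CY : ℝ) (hYbd : ∀ᵐ ω ∂Q, |Y ω| ≤ CY)
    (hlaw : ∀ (a1 : A1) (a2 : A2) (h : 𝒳 → ℝ), Measurable h →
      (∃ C, ∀ x, |h x| ≤ C) →
      ∫ ω, (if A1v ω = a1 ∧ A2v ω = a2 then h (X ω) else 0) ∂Q
        = ∫ x, μ1 x a1 * μ2 x a1 a2 * h x ∂P)
    (hlawY : ∀ (a1 : A1) (a2 : A2) (h : 𝒳 → ℝ), Measurable h →
      (∃ C, ∀ x, |h x| ≤ C) →
      ∫ ω, (if A1v ω = a1 ∧ A2v ω = a2 then Y ω * h (X ω) else 0) ∂Q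
        = ∫ x, μ1 x a1 * μ2 x a1 a2 * q x a1 a2 * h x ∂P) :
    |(∫ ω, ((∑ a1, π1 (X ω) a1 *
          ∑ a2 ∈ S (X ω) a1, π2 (X ω) a1 a2 * qhat (X ω) a1 a2) +
        π1 (X ω) (A1v ω) * π2 (X ω) (A1v ω) (A2v ω) /
          ehat (X ω) (A1v ω) (A2v ω) *
          (Y ω - qhat (X ω) (A1v ω) (A2v ω))) ∂Q) -
      ∫ x, ∑ a1, π1 x a1 * ∑ a2 ∈ S x a1, π2 x a1 a2 * q x a1 a2 ∂P|
    ≤ (νhat ^ 2)⁻¹ *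
        sSup {r : ℝ | ∃ x a1 a2, a2 ∈ S x a1 ∧
          r = |qhat x a1 a2 - q x a1 a2|} *
        sSup {r : ℝ | ∃ x a1 a2, a2 ∈ S x a1 ∧
          r = |ehat x a1 a2 - μ1 x a1 * μ2 x a1 a2|} :=
  stmt14_general (m𝒳 := m𝒳) P S π1 π2 hπ1meas hπ2meas hπ1nn hπ1sum hπ2nn hπ2sum hπ2supp μ1 μ2
    hμ1meas hμ2meas hμ1nn hμ1sum hμ2nn hμ2sum q hqmeas Cq hqbd qhat hqhatmeas ehat hehatmeas νhat hν
    hehatlb hqgap hegap Q X A1v A2v Y hX hA1v hA2v hYm CY hYbd hlaw hlawY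
end
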